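/- arXiv:2205.00717 — 4 statements merged into one kernel-verified Lean document; each statement's English description precedes it below -/
import Mathlib

section
/- Let φ̂ : ℝ → ℝ be defined by φ̂(ω) = 1 for |ω| ≤ 2π/3, φ̂(ω) = cos((π/2)·ν(3|ω|/(2π) − 1)) for 2π/3 ≤ |ω| ≤ 4π/3, and φ̂(ω) = 0 otherwise, where ν is an auxiliary function with ν(x) = 0 for x ≤ 0, ν(x) = 1 for x ≥ 1, and ν(x) + ν(1−x) = 1. Then for all ω ∈ ℝ, Σ_{k ∈ ℤ} |φ̂(ω + 2πk)|² = 1. -/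
/-!
The sum is `2π`-periodic in `ω`, and `φ̂` vanishes for `|ω| ≥ 4π/3`, so for `ω ∈ [-π, π)` only
the terms `k ∈ {-1, 0, 1}` survive. As `φ̂` is even, what remains is the identity
`φ̂(ω)² + φ̂(2π - ω)² = 1` on `[0, 2π]`. Off the band `2π/3 < ω < 4π/3` one of the two terms
is `1` and the other `0`; on it the arguments of `ν` at `ω` and at `2π - ω` are `t` and `1 - t`,
so by `ν t + ν (1 - t) = 1` the two cosines are a cosine and a sine of the same angle.
-/

open Real

theorem tsum_comp_add_zsmul_add_mul_intCast {M : Type*} [AddCommMonoid M] [TopologicalSpace M]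
    (f : ℝ → M) (p w : ℝ) (n : ℤ) :
    ∑' k : ℤ, f (w + n • p + p * k) = ∑' k : ℤ, f (w + p * k) := by
  rw [← (Equiv.addRight n).tsum_eq fun k : ℤ ↦ f (w + p * k)]
  congr! 2 with k
  exact congrArg f (by simp only [Equiv.coe_addRight, Int.cast_add, zsmul_eq_mul]; ring)

theorem tsum_comp_add_mul_intCast_eq_of_mem_Ico {M : Type*} [AddCommMonoid M]
    [TopologicalSpace M] {f : ℝ → M} {p : ℝ} (hp : 0 < p)
    (hf : ∀ x, 3 * p / 2 ≤ |x| → f x = 0) {w : ℝ} (hw : w ∈ Set.Ico (-(p / 2)) (p / 2)) :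
    ∑' k : ℤ, f (w + p * k) = f (w - p) + f w + f (w + p) := by
  obtain ⟨hw₁, hw₂⟩ := hw
  have hvanish : ∀ k ∉ ({-1, 0, 1} : Finset ℤ), f (w + p * k) = 0 := by
    intro k hk
    simp only [Finset.mem_insert, Finset.mem_singleton] at hk
    apply hf
    rcases le_or_gt k (-2) with hk' | hk'
    · have : (k : ℝ) ≤ -2 := by exact_mod_cast hk'
      rw [abs_of_neg (by nlinarith)]; nlinarith
    · have : (2 : ℝ) ≤ k := by exact_mod_cast (show 2 ≤ k by omega)
      rw [abs_of_pos (by nlinarith)]; nlinarith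
  rw [tsum_eq_sum hvanish]
  simp [sub_eq_add_neg, add_assoc]

theorem cos_sq_add_cos_sq_of_add_eq_one {a b : ℝ} (h : a + b = 1) :
    cos (π / 2 * a) ^ 2 + cos (π / 2 * b) ^ 2 = 1 := by
  rw [show π / 2 * a = π / 2 - π / 2 * b by rw [← sub_eq_of_eq_add' h.symm]; ring,
    cos_pi_div_two_sub, sin_sq_add_cos_sq]

noncomputable def meyerPhiHat (ν : ℝ → ℝ) (ω : ℝ) : ℝ :=
  if |ω| ≤ 2 * π / 3 then 1
  else if |ω| ≤ 4 * π / 3 then cos (π / 2 * ν (3 * |ω| / (2 * π) - 1))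
  else 0

section

variable {ν : ℝ → ℝ}

theorem meyerPhiHat_neg (ω : ℝ) : meyerPhiHat ν (-ω) = meyerPhiHat ν ω := by
  simp only [meyerPhiHat, abs_neg]

theorem meyerPhiHat_eq_one {ω : ℝ} (h : |ω| ≤ 2 * π / 3) : meyerPhiHat ν ω = 1 :=
  if_pos h

theorem meyerPhiHat_eq_cos {ω : ℝ} (h₁ : 2 * π / 3 < ω) (h₂ : ω ≤ 4 * π / 3) :
    meyerPhiHat ν ω = cos (π / 2 * ν (3 * ω / (2 * π) - 1)) := by
  have hω : |ω| = ω := abs_of_pos (by linarith [pi_pos])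
  rw [meyerPhiHat, hω, if_neg h₁.not_ge, if_pos h₂]

theorem meyerPhiHat_eq_zero (hν : ν 1 = 1) {ω : ℝ} (h : 4 * π / 3 ≤ |ω|) :
    meyerPhiHat ν ω = 0 := by
  rw [meyerPhiHat, if_neg (by linarith [pi_pos])]
  rcases h.lt_or_eq with h | h
  · rw [if_neg h.not_ge]
  · rw [if_pos h.ge, ← h, show 3 * (4 * π / 3) / (2 * π) - 1 = 1 by field_simp; ring, hν,
      mul_one, cos_pi_div_two]

theorem meyerPhiHat_sq_two_pi_sub_add_sq (hν₁ : ν 1 = 1) (hνs : ∀ x, ν x + ν (1 - x) = 1)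
    {ω : ℝ} (h₀ : 0 ≤ ω) (h₂ : ω ≤ 2 * π) :
    meyerPhiHat ν (2 * π - ω) ^ 2 + meyerPhiHat ν ω ^ 2 = 1 := by
  have hπ := pi_pos
  rcases le_or_gt ω (2 * π / 3) with hω | hω
  · rw [meyerPhiHat_eq_zero hν₁ (by rw [abs_of_pos (by linarith)]; linarith),
      meyerPhiHat_eq_one (by rw [abs_of_nonneg h₀]; exact hω)]
    norm_num
  rcases le_or_gt (4 * π / 3) ω with hω' | hω'
  · rw [meyerPhiHat_eq_one (by rw [abs_of_nonneg (by linarith)]; linarith),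
      meyerPhiHat_eq_zero hν₁ (by rw [abs_of_nonneg h₀]; exact hω')]
    norm_num
  have hmirror : 3 * (2 * π - ω) / (2 * π) - 1 = 1 - (3 * ω / (2 * π) - 1) := by
    field_simp; ring
  rw [meyerPhiHat_eq_cos (by linarith) (by linarith), meyerPhiHat_eq_cos hω hω'.le, hmirror]
  exact cos_sq_add_cos_sq_of_add_eq_one (by rw [add_comm]; exact hνs _)

theorem meyerPhiHat_sq_sub_two_pi_add_sq_add_sq_add_two_pi (hν₁ : ν 1 = 1)
    (hνs : ∀ x, ν x + ν (1 - x) = 1) {w : ℝ} (hw : w ∈ Set.Ico (-π) π) :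
    meyerPhiHat ν (w - 2 * π) ^ 2 + meyerPhiHat ν w ^ 2 + meyerPhiHat ν (w + 2 * π) ^ 2 =
      1 := by
  obtain ⟨hw₁, hw₂⟩ := hw
  have hπ := pi_pos
  rcases le_or_gt 0 w with hw | hw
  · rw [meyerPhiHat_eq_zero hν₁ (ω := w + 2 * π) (by rw [abs_of_pos (by linarith)]; linarith),
      ← meyerPhiHat_neg, neg_sub, meyerPhiHat_sq_two_pi_sub_add_sq hν₁ hνs hw (by linarith)]
    ring
  · rw [meyerPhiHat_eq_zero hν₁ (ω := w - 2 * π) (by rw [abs_of_neg (by linarith)]; linarith),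
      ← meyerPhiHat_neg w, show w + 2 * π = 2 * π - -w by ring, zero_pow two_ne_zero, zero_add,
      add_comm,
      meyerPhiHat_sq_two_pi_sub_add_sq hν₁ hνs (by linarith) (by linarith)]

end

theorem meyer_phihat_partition_of_unity_general
    (ν φhat : ℝ → ℝ)
    (hν1 : ∀ x ≥ (1:ℝ), ν x = 1)
    (hνs : ∀ x, ν x + ν (1 - x) = 1)
    (hφ : ∀ ω, φhat ω =
      if |ω| ≤ 2*π/3 then 1
      else if |ω| ≤ 4*π/3 then Real.cos (π/2 * ν (3*|ω|/(2*π) - 1))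
      else 0) :
    ∀ ω : ℝ, ∑' k : ℤ, (φhat (ω + 2*π*k))^2 = 1 := by
  obtain rfl : φhat = meyerPhiHat ν := funext hφ
  intro ω
  set w := toIcoMod two_pi_pos (-π) ω
  have hw : w ∈ Set.Ico (-π) π := by
    simpa [w, show -π + 2 * π = π by ring] using toIcoMod_mem_Ico two_pi_pos (-π) ω
  have hvanish (x : ℝ) (hx : 3 * (2 * π) / 2 ≤ |x|) : meyerPhiHat ν x ^ 2 = 0 := by
    rw [meyerPhiHat_eq_zero (hν1 1 le_rfl) (by linarith [pi_pos]), sq, mul_zero]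
  rw [← toIcoMod_add_toIcoDiv_zsmul two_pi_pos (-π) ω, tsum_comp_add_zsmul_add_mul_intCast
    (fun x => meyerPhiHat ν x ^ 2), tsum_comp_add_mul_intCast_eq_of_mem_Ico two_pi_pos hvanish
    (by simpa [show 2 * π / 2 = π by ring] using hw)]
  exact meyerPhiHat_sq_sub_two_pi_add_sq_add_sq_add_two_pi (hν1 1 le_rfl) hνs hw

theorem meyer_phihat_partition_of_unity
    (ν φhat : ℝ → ℝ)
    (hν0 : ∀ x ≤ (0:ℝ), ν x = 0) (hν1 : ∀ x ≥ (1:ℝ), ν x = 1)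
    (hνs : ∀ x, ν x + ν (1 - x) = 1)
    (hφ : ∀ ω, φhat ω =
      if |ω| ≤ 2*π/3 then 1
      else if |ω| ≤ 4*π/3 then Real.cos (π/2 * ν (3*|ω|/(2*π) - 1))
      else 0) :
    ∀ ω : ℝ, ∑' k : ℤ, (φhat (ω + 2*π*k))^2 = 1 :=
  meyer_phihat_partition_of_unity_general ν φhat hν1 hνs hφ
end

section
/- Let N ≥ 2 be an integer, let φ̂ be the Meyer Fourier transform (φ̂(ω) = 1 for |ω| ≤ 2π/3, cos((π/2)·ν(3|ω|/(2π) − 1)) for 2π/3 ≤ |ω| ≤ 4π/3, 0 otherwise), and let H⁰ : ℝ → ℝ be the 2π-periodic function equal on [−π, π] to: 1 for |ω| ≤ 2π/(3N), cos((π/2)·ν(3N|ω|/(2π) − 1)) for 2π/(3N) ≤ |ω| ≤ 4π/(3N), and 0 otherwise. Then for all ω ∈ ℝ, φ̂(ω) = H⁰(ω/N) · φ̂(ω/N). -/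
/-! `φ̂` is the window `m = meyerWindow ν`, and `H⁰ = m(N ·)` on `[-π, π]`.
For `|ω| ≤ 4π/3` the factor `φ̂(ω/N)` equals `1` (as `N ≥ 2`) and `H⁰(ω/N) = m(ω) = φ̂(ω)`.
For `|ω| > 4π/3` both sides vanish: either `φ̂(ω/N) = 0`, or `ω/N` lies in the annulus
`4π/(3N) ≤ |x| ≤ 2π - 4π/(3N)`, on which the `2π`-periodic `H⁰` vanishes. -/

open Real

noncomputable def meyerWindow (ν : ℝ → ℝ) (ω : ℝ) : ℝ :=
  if |ω| ≤ 2*π/3 then 1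
  else if |ω| ≤ 4*π/3 then cos (π/2 * ν (3*|ω|/(2*π) - 1))
  else 0

lemma meyerWindow_of_abs_le (ν : ℝ → ℝ) {ω : ℝ} (h : |ω| ≤ 2*π/3) : meyerWindow ν ω = 1 :=
  if_pos h

lemma meyerWindow_of_le_abs {ν : ℝ → ℝ} (hν1 : ∀ x ≥ (1:ℝ), ν x = 1) {ω : ℝ}
    (h : 4*π/3 ≤ |ω|) : meyerWindow ν ω = 0 := by
  have hπ := pi_pos
  unfold meyerWindow
  rw [if_neg (by linarith)]
  split_ifs with h'
  · have hω : |ω| = 4*π/3 := le_antisymm h' h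
    rw [hω, show 3*(4*π/3)/(2*π) - 1 = 1 by field_simp; ring, hν1 1 le_rfl, mul_one, cos_pi_div_two]
  · rfl

lemma meyerWindow_mul (ν : ℝ → ℝ) {a : ℝ} (ha : 0 < a) (ω : ℝ) :
    meyerWindow ν (a * ω) =
      if |ω| ≤ 2*π/(3*a) then 1
      else if |ω| ≤ 4*π/(3*a) then cos (π/2 * ν (3*a*|ω|/(2*π) - 1))
      else 0 := by
  have h3a : 0 < 3*a := by positivity
  have hscale (c : ℝ) : a*|ω| ≤ c/3 ↔ |ω| ≤ c/(3*a) := by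
    rw [le_div_iff₀ (by norm_num), le_div_iff₀ h3a, show a * |ω| * 3 = |ω| * (3*a) by ring]
  simp only [meyerWindow, abs_mul, abs_of_pos ha, hscale, mul_assoc]

lemma Function.Periodic.exists_abs_eq_two_pi_sub {f : ℝ → ℝ} (hf : Function.Periodic f (2*π))
    {x : ℝ} (hx : |x| ≤ 2*π) : ∃ y, |y| = 2*π - |x| ∧ f x = f y := by
  rcases le_or_gt 0 x with hx0 | hx0
  · rw [abs_of_nonneg hx0] at hx ⊢
    exact ⟨x - 2*π, by rw [abs_of_nonpos (by linarith)]; ring, (hf.sub_eq x).symm⟩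
  · rw [abs_of_neg hx0] at hx ⊢
    exact ⟨x + 2*π, by rw [abs_of_nonneg (by linarith)]; ring, (hf x).symm⟩

lemma eq_zero_of_periodic_of_eqOn_meyerWindow {ν H : ℝ → ℝ} (hν1 : ∀ x ≥ (1:ℝ), ν x = 1)
    {a : ℝ} (ha : 0 < a) (hper : Function.Periodic H (2*π))
    (hH : ∀ x ∈ Set.Icc (-π) π, H x = meyerWindow ν (a * x)) {x : ℝ}
    (hlo : 4*π/(3*a) ≤ |x|) (hhi : |x| ≤ 2*π - 4*π/(3*a)) : H x = 0 := by
  have hcentral : ∀ y, 4*π/(3*a) ≤ |y| → |y| ≤ π → H y = 0 := by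
    intro y hlo hπ
    rw [hH y (abs_le.mp hπ), meyerWindow_of_le_abs hν1]
    rw [div_le_iff₀ (by positivity)] at hlo
    rw [abs_mul, abs_of_pos ha]
    linarith
  rcases le_or_gt |x| π with hx | hx
  · exact hcentral x hlo hx
  · have hpos : 0 < 4*π/(3*a) := by positivity
    obtain ⟨y, hy, hxy⟩ := hper.exists_abs_eq_two_pi_sub (x := x) (by linarith)
    rw [hxy]
    exact hcentral y (by linarith) (by linarith)

theorem meyer_is_N_scaling_general
    (N : ℕ) (hN : 2 ≤ N)
    (ν φhat H0 : ℝ → ℝ)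
    (hν1 : ∀ x ≥ (1:ℝ), ν x = 1)
    (hφ : ∀ ω, φhat ω =
      if |ω| ≤ 2*π/3 then 1
      else if |ω| ≤ 4*π/3 then Real.cos (π/2 * ν (3*|ω|/(2*π) - 1))
      else 0)
    (hH0per : ∀ ω, H0 (ω + 2*π) = H0 ω)
    (hH0 : ∀ ω ∈ Set.Icc (-π) π, H0 ω =
      if |ω| ≤ 2*π/(3*N) then 1
      else if |ω| ≤ 4*π/(3*N) then Real.cos (π/2 * ν (3*N*|ω|/(2*π) - 1))
      else 0) :
    ∀ ω : ℝ, φhat ω = H0 (ω / N) * φhat (ω / N) := by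
  obtain rfl : φhat = meyerWindow ν := funext hφ
  have hN2 : (2:ℝ) ≤ N := by exact_mod_cast hN
  have hNpos : (0:ℝ) < N := by linarith
  have hH : ∀ x ∈ Set.Icc (-π) π, H0 x = meyerWindow ν (N * x) := fun x hx =>
    (hH0 x hx).trans (meyerWindow_mul ν hNpos x).symm
  intro ω
  have habs : |ω / N| = |ω| / N := by rw [abs_div, abs_of_pos hNpos]
  have hπ := pi_pos
  rcases le_or_gt |ω| (4*π/3) with hω | hω
  · have hsmall : |ω / N| ≤ 2*π/3 := by
      rw [habs, div_le_iff₀ hNpos]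
      nlinarith [abs_nonneg ω]
    rw [meyerWindow_of_abs_le ν hsmall, hH _ (abs_le.mp (by linarith)), mul_div_cancel₀ _ hNpos.ne',
      mul_one]
  · rw [meyerWindow_of_le_abs hν1 hω.le]
    rcases le_or_gt (4*π/3) |ω / N| with hωN | hωN
    · rw [meyerWindow_of_le_abs hν1 hωN, mul_zero]
    · have hlo : 4*π/(3*N) ≤ |ω / N| := by
        rw [habs, show 4*π/(3*N) = 4*π/3/N by ring]
        exact div_le_div_of_nonneg_right hω.le hNpos.le
      have hhi : |ω / N| ≤ 2*π - 4*π/(3*N) := by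
        have : 4*π/(3*N) ≤ 2*π/3 := by
          rw [div_le_div_iff₀ (by positivity) (by norm_num)]
          nlinarith
        linarith
      rw [eq_zero_of_periodic_of_eqOn_meyerWindow hν1 hNpos hH0per hH hlo hhi, zero_mul]

theorem meyer_is_N_scaling
    (N : ℕ) (hN : 2 ≤ N)
    (ν φhat H0 : ℝ → ℝ)
    (hν0 : ∀ x ≤ (0:ℝ), ν x = 0) (hν1 : ∀ x ≥ (1:ℝ), ν x = 1)
    (hνs : ∀ x, ν x + ν (1 - x) = 1)
    (hφ : ∀ ω, φhat ω =
      if |ω| ≤ 2*π/3 then 1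
      else if |ω| ≤ 4*π/3 then Real.cos (π/2 * ν (3*|ω|/(2*π) - 1))
      else 0)
    (hH0per : ∀ ω, H0 (ω + 2*π) = H0 ω)
    (hH0 : ∀ ω ∈ Set.Icc (-π) π, H0 ω =
      if |ω| ≤ 2*π/(3*N) then 1
      else if |ω| ≤ 4*π/(3*N) then Real.cos (π/2 * ν (3*N*|ω|/(2*π) - 1))
      else 0) :
    ∀ ω : ℝ, φhat ω = H0 (ω / N) * φhat (ω / N) :=
  meyer_is_N_scaling_general N hN ν φhat H0 hν1 hφ hH0per hH0
end

section
/- Let N ≥ 2 be an integer and H⁰ the Meyer N-scaling frequency function (2π-periodic, equal on [−π,π] to 1 for |ω| ≤ 2π/(3N), cos((π/2)·ν(3N|ω|/(2π) − 1)) for 2π/(3N) ≤ |ω| ≤ 4π/(3N), 0 otherwise). Then Σ_{s=0}^{N−1} |H⁰(ω − 2πs/N)|² = 1 for all ω ∈ ℝ. -/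
set_option maxHeartbeats 1000000

open Real

theorem meyer_row_normalization
    (N : ℕ) (hN : 2 ≤ N)
    (ν H0 : ℝ → ℝ)
    (hν0 : ∀ x ≤ (0:ℝ), ν x = 0) (hν1 : ∀ x ≥ (1:ℝ), ν x = 1)
    (hνs : ∀ x, ν x + ν (1 - x) = 1)
    (hH0per : ∀ ω, H0 (ω + 2*π) = H0 ω)
    (hH0 : ∀ ω ∈ Set.Icc (-π) π, H0 ω =
      if |ω| ≤ 2*π/(3*N) then 1
      else if |ω| ≤ 4*π/(3*N) then Real.cos (π/2 * ν (3*N*|ω|/(2*π) - 1))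
      else 0) :
    ∀ ω : ℝ, ∑ s ∈ Finset.range N, |H0 (ω - 2*π*s/N)|^2 = 1 := by
  have hπ := Real.pi_pos
  have hN2 : (2:ℝ) ≤ (N:ℝ) := by exact_mod_cast hN
  have hN0 : (0:ℝ) < (N:ℝ) := by linarith
  have hD : (0:ℝ) < 3*(N:ℝ) := by positivity
  have e1 : (0:ℝ) < 2*π/(3*(N:ℝ)) := by positivity
  have e2 : 2*π/(3*(N:ℝ)) + 2*π/(3*(N:ℝ)) = 4*π/(3*(N:ℝ)) := by ring
  have m6 : 2*π/(N:ℝ) = 3*(2*π/(3*(N:ℝ))) := by ring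
  have hb43 : 4*π/(3*(N:ℝ)) ≤ 2*π/3 := by
    rw [div_le_div_iff₀ hD (by norm_num : (0:ℝ) < 3)]
    nlinarith
  -- vanishing lemma
  have hvanish : ∀ w : ℝ, 4*π/(3*(N:ℝ)) < w → w < 2*π - 4*π/(3*(N:ℝ)) → H0 w = 0 := by
    intro w h1 h2
    rcases le_or_gt w π with hw | hw
    · rw [hH0 w ⟨by linarith, hw⟩, abs_of_pos (by linarith)]
      rw [if_neg (by linarith), if_neg (by linarith)]
    · have hper := hH0per (w - 2*π)
      rw [show w - 2*π + 2*π = w by ring] at hper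
      rw [hper, hH0 (w - 2*π) ⟨by linarith, by linarith⟩]
      rw [abs_of_nonpos (by linarith)]
      rw [if_neg (by linarith), if_neg (by linarith)]
  -- define S and show periodicity
  set S : ℝ → ℝ := fun x => ∑ s ∈ Finset.range N, |H0 (x - 2*π*(s:ℝ)/(N:ℝ))|^2 with hS
  have hSper : Function.Periodic S (2*π/(N:ℝ)) := by
    intro x
    obtain ⟨M, hM⟩ : ∃ M, N = M + 1 := ⟨N - 1, by omega⟩
    have hMR : (N:ℝ) = (M:ℝ) + 1 := by rw [hM]; push_cast; ring
    have hM0 : ((M:ℝ) + 1) ≠ 0 := by rw [← hMR]; positivity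
    simp only [hS, hM]
    rw [Finset.sum_range_succ', Finset.sum_range_succ]
    congr 1
    · apply Finset.sum_congr rfl
      intro i _
      congr 2
      push_cast
      rw [← hMR]
      ring
    · congr 1
      push_cast
      rw [← hMR]
      have harg : x + 2*π/(N:ℝ) - 2*π*(0:ℝ)/(N:ℝ) = (x - 2*π*((N:ℝ)-1)/(N:ℝ)) + 2*π := by
        rw [hMR]
        field_simp
        ring
      rw [show ((M:ℝ)) = (N:ℝ) - 1 by rw [hMR]; ring, harg, hH0per]
  -- reduce to fundamental domain
  intro ω
  have hc : (0:ℝ) < 2*π/(N:ℝ) := by positivity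
  obtain ⟨y, hy, hEq⟩ := hSper.exists_mem_Ico hc ω (2*π/(3*(N:ℝ)))
  show S ω = 1
  rw [hEq]
  obtain ⟨hy1, hy2⟩ := hy
  -- bounds in multiplied form
  have hyl : 2*π ≤ 3*(N:ℝ)*y := by
    have := (div_le_iff₀ hD).mp hy1
    linarith
  have hyu : 3*(N:ℝ)*y < 8*π := by
    have h8 : 2*π/(3*(N:ℝ)) + 2*π/(N:ℝ) = 8*π/(3*(N:ℝ)) := by
      field_simp
      ring
    rw [h8] at hy2
    have := (lt_div_iff₀ hD).mp hy2
    linarith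
  have hy0 : 0 < y := by linarith
  -- reduce sum to first two terms
  have hsub : Finset.range 2 ⊆ Finset.range N := Finset.range_subset_range.mpr hN
  have hred : S y = ∑ s ∈ Finset.range 2, |H0 (y - 2*π*(s:ℝ)/(N:ℝ))|^2 := by
    rw [hS]
    refine (Finset.sum_subset hsub ?_).symm
    intro s hsN hs2
    have hs2' : 2 ≤ s := by simp at hs2; omega
    have hsN' : s + 1 ≤ N := Finset.mem_range.mp hsN
    have hsR1 : (2:ℝ) ≤ (s:ℝ) := by exact_mod_cast hs2'
    have hsR2 : (s:ℝ) + 1 ≤ (N:ℝ) := by exact_mod_cast hsN'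
    have hp1 : 6*π*((s:ℝ)+1) ≤ 6*π*(N:ℝ) :=
      mul_le_mul_of_nonneg_left hsR2 (by positivity)
    have hp2 : 6*π*2 ≤ 6*π*(s:ℝ) :=
      mul_le_mul_of_nonneg_left hsR1 (by positivity)
    have hzero : H0 (y - 2*π*(s:ℝ)/(N:ℝ)) = 0 := by
      have hper := hH0per (y - 2*π*(s:ℝ)/(N:ℝ))
      rw [← hper]
      have hform : y - 2*π*(s:ℝ)/(N:ℝ) + 2*π
          = (3*(N:ℝ)*y - 6*π*(s:ℝ) + 6*π*(N:ℝ))/(3*(N:ℝ)) := by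
        field_simp
        ring
      apply hvanish
      · rw [hform, div_lt_div_iff_of_pos_right hD]
        nlinarith
      · rw [hform, show 2*π - 4*π/(3*(N:ℝ)) = (6*π*(N:ℝ) - 4*π)/(3*(N:ℝ)) by
          field_simp; ring, div_lt_div_iff_of_pos_right hD]
        nlinarith
    rw [hzero]
    simp
  rw [hred, Finset.sum_range_succ, Finset.sum_range_one]
  simp only [Nat.cast_zero, Nat.cast_one, mul_zero, zero_div, sub_zero, mul_one]
  rcases le_or_gt y (4*π/(3*(N:ℝ))) with ha | ha
  · -- overlap region
    have haM : 3*(N:ℝ)*y ≤ 4*π := by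
      have := (le_div_iff₀ hD).mp ha
      linarith
    have hyπ : y ≤ 2*π/3 := by linarith
    have hcosy : H0 y = Real.cos (π/2 * ν (3*(N:ℝ)*y/(2*π) - 1)) := by
      rw [hH0 y ⟨by linarith, by linarith⟩, abs_of_pos hy0]
      split_ifs with h1 h2
      · have h1' := (le_div_iff₀ hD).mp h1
        have hyeq : 3*(N:ℝ)*y = 2*π := by linarith
        rw [show 3*(N:ℝ)*y/(2*π) - 1 = 0 by rw [hyeq]; field_simp <;> ring]
        rw [hν0 0 le_rfl, mul_zero, Real.cos_zero]
      all_goals try rfl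
      all_goals exact absurd ha (by assumption)
    have hv0 : y - 2*π/(N:ℝ) ≤ 0 := by linarith
    have hcos1 : H0 (y - 2*π/(N:ℝ))
        = Real.cos (π/2 * ν (1 - (3*(N:ℝ)*y/(2*π) - 1))) := by
      rw [hH0 (y - 2*π/(N:ℝ)) ⟨by linarith, by linarith⟩, abs_of_nonpos hv0]
      have hform : -(y - 2*π/(N:ℝ)) = (6*π - 3*(N:ℝ)*y)/(3*(N:ℝ)) := by
        field_simp
        ring
      split_ifs with h1 h2
      · rw [hform, div_le_div_iff_of_pos_right hD] at h1
        have hyeq : 3*(N:ℝ)*y = 4*π := by linarith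
        rw [show (1:ℝ) - (3*(N:ℝ)*y/(2*π) - 1) = 0 by
          rw [hyeq]; field_simp <;> ring]
        rw [hν0 0 le_rfl, mul_zero, Real.cos_zero]
      · rw [show 3*(N:ℝ)*(-(y - 2*π/(N:ℝ)))/(2*π) - 1 = 1 - (3*(N:ℝ)*y/(2*π) - 1) by
          field_simp
          ring]
      · exfalso
        apply h2
        rw [hform, div_le_div_iff_of_pos_right hD]
        linarith
    rw [hcosy, hcos1, sq_abs, sq_abs]
    have hν := hνs (3*(N:ℝ)*y/(2*π) - 1)
    rw [show ν (1 - (3*(N:ℝ)*y/(2*π) - 1)) = 1 - ν (3*(N:ℝ)*y/(2*π) - 1) by linarith]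
    rw [show π/2 * (1 - ν (3*(N:ℝ)*y/(2*π) - 1))
        = π/2 - π/2 * ν (3*(N:ℝ)*y/(2*π) - 1) by ring]
    rw [Real.cos_pi_div_two_sub]
    exact Real.cos_sq_add_sin_sq _
  · -- non-overlap region
    have haM : 4*π < 3*(N:ℝ)*y := by
      have := (div_lt_iff₀ hD).mp ha
      linarith
    have hπN : π*2 ≤ π*(N:ℝ) := mul_le_mul_of_nonneg_left hN2 hπ.le
    have hH0y : H0 y = 0 := by
      apply hvanish y ha
      rw [show 2*π - 4*π/(3*(N:ℝ)) = (6*π*(N:ℝ) - 4*π)/(3*(N:ℝ)) by field_simp; ring,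
        lt_div_iff₀ hD]
      nlinarith
    have hH01 : H0 (y - 2*π/(N:ℝ)) = 1 := by
      rw [hH0 (y - 2*π/(N:ℝ)) ⟨by linarith, by linarith⟩, if_pos]
      rw [abs_le]
      constructor <;> linarith
    rw [hH0y, hH01]
    norm_num
end

section
/- Let N ≥ 2, M ≥ 2 and suppose H⁰, G⁰ are the Meyer frequency functions with scaling factors N and M respectively (2π-periodic, H⁰ equal on [−π,π] to 1 for |ω| ≤ 2π/(3N), cos((π/2)·ν(3N|ω|/(2π) − 1)) for 2π/(3N) ≤ |ω| ≤ 4π/(3N), 0 otherwise; G⁰ similarly with M). Then the product H^{00}(ω) := G⁰(Nω)·H⁰(ω) satisfies φ̂(ω) = H^{00}(ω/(MN))·φ̂(ω/(MN)) for all ω, where φ̂ is the Meyer Fourier transform. -/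
open Real

lemma meyer_filter_core (K : ℕ) (hK : 2 ≤ K) (ν F : ℝ → ℝ)
    (hν1 : ∀ x ≥ (1:ℝ), ν x = 1)
    (hF : ∀ ω ∈ Set.Icc (-π) π, F ω =
      if |ω| ≤ 2*π/(3*K) then 1
      else if |ω| ≤ 4*π/(3*K) then Real.cos (π/2 * ν (3*K*|ω|/(2*π) - 1))
      else 0)
    (w : ℝ) (hw : |w| ≤ π) (h1 : 4*π/(3*K) ≤ |w|) : F w = 0 := by
  have hπ := Real.pi_pos
  have hK' : (2:ℝ) ≤ (K:ℝ) := by exact_mod_cast hK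
  have hKpos : (0:ℝ) < 3*(K:ℝ) := by linarith
  have h1' : 4*π ≤ 3*(K:ℝ)*|w| := by
    have := (div_le_iff₀ hKpos).mp h1
    nlinarith [abs_nonneg w]
  have hmem : w ∈ Set.Icc (-π) π := by
    rw [Set.mem_Icc]; exact abs_le.mp hw
  rw [hF w hmem, if_neg]
  · split_ifs with h2
    · have harg : (1:ℝ) ≤ 3*K*|w|/(2*π) - 1 := by
        rw [le_sub_iff_add_le, le_div_iff₀ (by positivity)]
        nlinarith
      rw [hν1 _ harg, mul_one, Real.cos_pi_div_two]
    · rfl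
  · push_neg
    rw [div_lt_iff₀ hKpos]
    nlinarith

lemma meyer_filter_zero (K : ℕ) (hK : 2 ≤ K) (ν F : ℝ → ℝ)
    (hν1 : ∀ x ≥ (1:ℝ), ν x = 1)
    (hper : ∀ ω, F (ω + 2*π) = F ω)
    (hF : ∀ ω ∈ Set.Icc (-π) π, F ω =
      if |ω| ≤ 2*π/(3*K) then 1
      else if |ω| ≤ 4*π/(3*K) then Real.cos (π/2 * ν (3*K*|ω|/(2*π) - 1))
      else 0)
    (w : ℝ) (h1 : 4*π/(3*K) ≤ |w|) (h2 : |w| ≤ 4*π/3) : F w = 0 := by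
  have hπ := Real.pi_pos
  have hK' : (2:ℝ) ≤ (K:ℝ) := by exact_mod_cast hK
  have hbound : 4*π/(3*(K:ℝ)) ≤ 2*π/3 := by
    rw [div_le_div_iff₀ (by linarith) (by linarith)]
    nlinarith
  rcases le_or_gt |w| π with hw | hw
  · exact meyer_filter_core K hK ν F hν1 hF w hw h1
  · rcases le_or_gt 0 w with hw0 | hw0
    · have hwgt : π < w := by rwa [abs_of_nonneg hw0] at hw
      have hwle : w ≤ 4*π/3 := by rwa [abs_of_nonneg hw0] at h2
      have hFeq : F w = F (w - 2*π) := by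
        have := hper (w - 2*π)
        have he : w - 2*π + 2*π = w := by ring
        rw [he] at this
        exact this
      rw [hFeq]
      have habs : |w - 2*π| = 2*π - w := by
        rw [abs_of_nonpos (by linarith)]; ring
      exact meyer_filter_core K hK ν F hν1 hF (w - 2*π)
        (by rw [habs]; linarith) (by rw [habs]; linarith)
    · have hwgt : w < -π := by
        rw [abs_of_neg hw0] at hw; linarith
      have hwle : -(4*π/3) ≤ w := by
        rw [abs_of_neg hw0] at h2; linarith
      have hFeq : F w = F (w + 2*π) := (hper w).symm
      rw [hFeq]
      have habs : |w + 2*π| = w + 2*π := by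
        rw [abs_of_nonneg (by linarith)]
      exact meyer_filter_core K hK ν F hν1 hF (w + 2*π)
        (by rw [habs]; linarith) (by rw [habs]; linarith)

set_option maxHeartbeats 1600000 in
theorem meyer_composed_MN_scaling
    (M N : ℕ) (hM : 2 ≤ M) (hN : 2 ≤ N)
    (ν φhat H0 G0 : ℝ → ℝ)
    (hν0 : ∀ x ≤ (0:ℝ), ν x = 0) (hν1 : ∀ x ≥ (1:ℝ), ν x = 1)
    (hνs : ∀ x, ν x + ν (1 - x) = 1)
    (hφ : ∀ ω, φhat ω =
      if |ω| ≤ 2*π/3 then 1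
      else if |ω| ≤ 4*π/3 then Real.cos (π/2 * ν (3*|ω|/(2*π) - 1))
      else 0)
    (hH0per : ∀ ω, H0 (ω + 2*π) = H0 ω)
    (hH0 : ∀ ω ∈ Set.Icc (-π) π, H0 ω =
      if |ω| ≤ 2*π/(3*N) then 1
      else if |ω| ≤ 4*π/(3*N) then Real.cos (π/2 * ν (3*N*|ω|/(2*π) - 1))
      else 0)
    (hG0per : ∀ ω, G0 (ω + 2*π) = G0 ω)
    (hG0 : ∀ ω ∈ Set.Icc (-π) π, G0 ω =
      if |ω| ≤ 2*π/(3*M) then 1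
      else if |ω| ≤ 4*π/(3*M) then Real.cos (π/2 * ν (3*M*|ω|/(2*π) - 1))
      else 0) :
    ∀ ω : ℝ,
      φhat ω = (G0 (N * (ω / (M * N))) * H0 (ω / (M * N))) * φhat (ω / (M * N)) := by
  intro ω
  have hπ := Real.pi_pos
  have hM' : (2:ℝ) ≤ (M:ℝ) := by exact_mod_cast hM
  have hN' : (2:ℝ) ≤ (N:ℝ) := by exact_mod_cast hN
  have hM0 : (0:ℝ) < (M:ℝ) := by linarith
  have hN0 : (0:ℝ) < (N:ℝ) := by linarith
  have hMne : (M:ℝ) ≠ 0 := ne_of_gt hM0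
  have hNne : (N:ℝ) ≠ 0 := ne_of_gt hN0
  have hMN4 : (4:ℝ) ≤ (M:ℝ)*(N:ℝ) := by nlinarith
  have hMN0 : (0:ℝ) < (M:ℝ)*(N:ℝ) := by linarith
  have hv : (N:ℝ) * (ω / ((M:ℝ) * N)) = ω / M := by field_simp
  have habs_u : |ω / ((M:ℝ) * (N:ℝ))| = |ω| / ((M:ℝ)*N) := by
    rw [abs_div, abs_of_pos hMN0]
  have habs_v : |(N:ℝ) * (ω / ((M:ℝ) * N))| = |ω| / (M:ℝ) := by
    rw [hv, abs_div, abs_of_pos hM0]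
  have hων : 0 ≤ |ω| := abs_nonneg ω
  rcases le_or_gt |ω| (2*π/3) with h1 | h1
  · -- |ω| ≤ 2π/3 : everything is 1
    have hu1 : |ω / ((M:ℝ) * (N:ℝ))| ≤ 2*π/(3*(N:ℝ)) := by
      rw [habs_u, div_le_div_iff₀ hMN0 (by positivity)]
      nlinarith [mul_le_mul_of_nonneg_right h1 (show (0:ℝ) ≤ 3*(N:ℝ) by positivity),
        mul_nonneg (mul_nonneg hπ.le hN0.le) (show (0:ℝ) ≤ (M:ℝ)-2 by linarith),
        mul_pos hπ hN0]
    have huπ : |ω / ((M:ℝ) * (N:ℝ))| ≤ π := by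
      rw [habs_u, div_le_iff₀ hMN0]
      nlinarith [mul_le_mul_of_nonneg_left hMN4 hπ.le]
    have huφ : |ω / ((M:ℝ) * (N:ℝ))| ≤ 2*π/3 := by
      rw [habs_u, div_le_iff₀ hMN0]
      nlinarith [mul_le_mul_of_nonneg_left hMN4 (show (0:ℝ) ≤ 2*π/3 by positivity)]
    have hv1 : |(N:ℝ) * (ω / ((M:ℝ) * N))| ≤ 2*π/(3*(M:ℝ)) := by
      rw [habs_v, div_le_div_iff₀ hM0 (by positivity)]
      nlinarith [mul_le_mul_of_nonneg_right h1 (show (0:ℝ) ≤ 3*(M:ℝ) by positivity),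
        mul_pos hπ hM0]
    have hvπ : |(N:ℝ) * (ω / ((M:ℝ) * N))| ≤ π := by
      rw [habs_v, div_le_iff₀ hM0]
      nlinarith [mul_le_mul_of_nonneg_left hM' hπ.le]
    rw [hφ ω, if_pos h1, hφ (ω / ((M:ℝ) * (N:ℝ))), if_pos huφ,
        hH0 _ (Set.mem_Icc.mpr (abs_le.mp huπ)), if_pos hu1,
        hG0 _ (Set.mem_Icc.mpr (abs_le.mp hvπ)), if_pos hv1]
    ring
  · rcases le_or_gt |ω| (4*π/3) with h2 | h2
    · -- 2π/3 < |ω| ≤ 4π/3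
      have hu1 : |ω / ((M:ℝ) * (N:ℝ))| ≤ 2*π/(3*(N:ℝ)) := by
        rw [habs_u, div_le_div_iff₀ hMN0 (by positivity)]
        nlinarith [mul_le_mul_of_nonneg_right h2 (show (0:ℝ) ≤ 3*(N:ℝ) by positivity),
          mul_nonneg (mul_nonneg hπ.le hN0.le) (show (0:ℝ) ≤ (M:ℝ)-2 by linarith),
          mul_pos hπ hN0]
      have huπ : |ω / ((M:ℝ) * (N:ℝ))| ≤ π := by
        rw [habs_u, div_le_iff₀ hMN0]
        nlinarith [mul_le_mul_of_nonneg_left hMN4 hπ.le]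
      have huφ : |ω / ((M:ℝ) * (N:ℝ))| ≤ 2*π/3 := by
        rw [habs_u, div_le_iff₀ hMN0]
        nlinarith [mul_le_mul_of_nonneg_left hMN4 (show (0:ℝ) ≤ 2*π/3 by positivity)]
      have hvπ : |(N:ℝ) * (ω / ((M:ℝ) * N))| ≤ π := by
        rw [habs_v, div_le_iff₀ hM0]
        nlinarith [mul_le_mul_of_nonneg_left hM' hπ.le]
      have hv1 : ¬ |(N:ℝ) * (ω / ((M:ℝ) * N))| ≤ 2*π/(3*(M:ℝ)) := by
        push_neg
        rw [habs_v, div_lt_div_iff₀ (by positivity) hM0]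
        nlinarith [mul_lt_mul_of_pos_right h1 (show (0:ℝ) < 3*(M:ℝ) by positivity)]
      have hv2 : |(N:ℝ) * (ω / ((M:ℝ) * N))| ≤ 4*π/(3*(M:ℝ)) := by
        rw [habs_v, div_le_div_iff₀ hM0 (by positivity)]
        nlinarith [mul_le_mul_of_nonneg_right h2 (show (0:ℝ) ≤ 3*(M:ℝ) by positivity)]
      have harg : 3*(M:ℝ)*|(N:ℝ) * (ω / ((M:ℝ) * N))|/(2*π) - 1
          = 3*|ω|/(2*π) - 1 := by
        rw [habs_v]
        congr 1
        congr 1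
        field_simp
      rw [hφ ω, if_neg (not_le.mpr h1), if_pos h2, hφ (ω / ((M:ℝ) * (N:ℝ))), if_pos huφ,
          hH0 _ (Set.mem_Icc.mpr (abs_le.mp huπ)), if_pos hu1,
          hG0 _ (Set.mem_Icc.mpr (abs_le.mp hvπ)), if_neg hv1, if_pos hv2,
          harg]
      ring
    · -- |ω| > 4π/3 : LHS = 0, some factor vanishes
      rw [hφ ω, if_neg (by push_neg; linarith), if_neg (not_le.mpr h2)]
      rcases le_or_gt |ω / ((M:ℝ) * (N:ℝ))| (4*π/3) with hu2 | hu2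
      · rcases le_or_gt (4*π/(3*(N:ℝ))) |ω / ((M:ℝ) * (N:ℝ))| with hu3 | hu3
        · -- H0 u = 0
          rw [meyer_filter_zero N hN ν H0 hν1 hH0per hH0 _ hu3 hu2]
          ring
        · -- G0 v = 0
          have hu3' : |ω| * (3*(N:ℝ)) < 4*π*((M:ℝ)*N) := by
            rw [habs_u, div_lt_div_iff₀ hMN0 (by positivity)] at hu3
            linarith
          have hvlo : 4*π/(3*(M:ℝ)) ≤ |(N:ℝ) * (ω / ((M:ℝ) * N))| := by
            rw [habs_v, div_le_div_iff₀ (by positivity) hM0]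
            nlinarith [mul_lt_mul_of_pos_right h2 (show (0:ℝ) < 3*(M:ℝ) by positivity)]
          have hvhi : |(N:ℝ) * (ω / ((M:ℝ) * N))| ≤ 4*π/3 := by
            rw [habs_v, div_le_div_iff₀ hM0 (by norm_num)]
            nlinarith [hu3', hN0]
          rw [meyer_filter_zero M hM ν G0 hν1 hG0per hG0 _ hvlo hvhi]
          ring
      · -- φhat u = 0
        have hu1 : ¬ |ω / ((M:ℝ) * (N:ℝ))| ≤ 2*π/3 := by push_neg; linarith
        rw [hφ (ω / ((M:ℝ) * (N:ℝ))), if_neg hu1, if_neg (not_le.mpr hu2)]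
        ring
end
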